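/- arXiv:1907.05991 — 2 statements merged into one kernel-verified Lean document; each statement's English description precedes it below -/
import Mathlib

section
/- If A: X → Dists(Y) provides (ε, d, D_f)-extended DP with respect to Φ (i.e., D_f(A(x)‖A(x')) ≤ ε·d(x,x') for all (x,x') ∈ Φ), then for any pair of distributions (λ₀, λ₁) admitting a coupling γ with supp(γ) ⊆ Φ that attains the Earth mover's distance W₁(λ₀,λ₁) = Σ γ[x₀,x₁]·d(x₀,x₁), we have D_f(A#(λ₀)‖A#(λ₁)) ≤ ε · W₁(λ₀,λ₁). -/
open Finset Real

/-!
By joint convexity of the perspective `(a, b) ↦ b f(a / b)`, the divergence of the lifted outputs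
is at most the `γ`-average of the pointwise divergences `D_f(A x₀ ‖ A x₁)`, once both lifted
distributions are written as mixtures over the same coupling `γ`. Every pair charged by `γ` lies
in `Φ`, so each of these divergences is at most `ε d(x₀, x₁)`, and averaging gives `ε` times the
transport cost of `γ`, which is `W₁(λ₀, λ₁)`.
-/

theorem ConvexOn.mul_map_div_sum_le {ι : Type*} {f : ℝ → ℝ} (hf : ConvexOn ℝ (Set.Ici 0) f)
    (s : Finset ι) {w a b : ι → ℝ} (hw : ∀ i ∈ s, 0 ≤ w i) (ha : ∀ i ∈ s, 0 ≤ a i)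
    (hb : ∀ i ∈ s, 0 < b i) :
    (∑ i ∈ s, w i * b i) * f ((∑ i ∈ s, w i * a i) / ∑ i ∈ s, w i * b i) ≤
      ∑ i ∈ s, w i * (b i * f (a i / b i)) := by
  have hwb : ∀ i ∈ s, 0 ≤ w i * b i := fun i hi => mul_nonneg (hw i hi) (hb i hi).le
  generalize hBdef : ∑ i ∈ s, w i * b i = B
  rcases (hBdef ▸ sum_nonneg hwb : 0 ≤ B).eq_or_lt with hB | hB
  · have hwb0 : ∀ i ∈ s, w i * b i = 0 :=
      (sum_eq_zero_iff_of_nonneg hwb).mp (hBdef.trans hB.symm)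
    rw [← hB, zero_mul, sum_eq_zero fun i hi => by rw [← mul_assoc, hwb0 i hi, zero_mul]]
  have hJensen := hf.map_sum_le (t := s) (w := fun i => w i * b i / B) (p := fun i => a i / b i)
    (fun i hi => div_nonneg (hwb i hi) hB.le)
    (by rw [← sum_div, hBdef, div_self hB.ne'])
    (fun i hi => div_nonneg (ha i hi) (hb i hi).le)
  have hmean : ∑ i ∈ s, (w i * b i / B) • (a i / b i) = (∑ i ∈ s, w i * a i) / B := by
    rw [sum_div]
    refine sum_congr rfl fun i hi => ?_
    have hbi : b i ≠ 0 := (hb i hi).ne'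
    simp only [smul_eq_mul]
    field_simp
  calc B * f ((∑ i ∈ s, w i * a i) / B)
      ≤ B * ∑ i ∈ s, (w i * b i / B) • f (a i / b i) := by
        rw [← hmean]; exact mul_le_mul_of_nonneg_left hJensen hB.le
    _ = ∑ i ∈ s, w i * (b i * f (a i / b i)) := by
        rw [mul_sum]
        refine sum_congr rfl fun i _ => ?_
        simp only [smul_eq_mul]
        field_simp

section Lifting

variable {X Y : Type*} [Fintype X]

-- `liftDist A l` is the lifting `A#(l)` and `fDiv f P Q` is `D_f(P ‖ Q)`.
def liftDist (A : X → Y → ℝ) (l : X → ℝ) (y : Y) : ℝ :=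
  ∑ x, l x * A x y

noncomputable def fDiv [Fintype Y] (f : ℝ → ℝ) (P Q : Y → ℝ) : ℝ :=
  ∑ y, Q y * f (P y / Q y)

theorem liftDist_eq_sum_coupling_fst (A : X → Y → ℝ) {l : X → ℝ} {γ : X × X → ℝ}
    (hl : ∀ x₀, l x₀ = ∑ x₁, γ (x₀, x₁)) (y : Y) :
    liftDist A l y = ∑ p : X × X, γ p * A p.1 y := by
  rw [Fintype.sum_prod_type]
  exact sum_congr rfl fun x _ => by rw [hl x, sum_mul]

theorem liftDist_eq_sum_coupling_snd (A : X → Y → ℝ) {l : X → ℝ} {γ : X × X → ℝ}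
    (hl : ∀ x₁, l x₁ = ∑ x₀, γ (x₀, x₁)) (y : Y) :
    liftDist A l y = ∑ p : X × X, γ p * A p.2 y := by
  rw [Fintype.sum_prod_type, sum_comm]
  exact sum_congr rfl fun x _ => by rw [hl x, sum_mul]

theorem fDiv_liftDist_le_sum_coupling [Fintype Y] {f : ℝ → ℝ} (hf : ConvexOn ℝ (Set.Ici 0) f)
    {A : X → Y → ℝ} (hA : ∀ x y, 0 < A x y) {l₀ l₁ : X → ℝ} {γ : X × X → ℝ}
    (hγ : ∀ p, 0 ≤ γ p) (hl₀ : ∀ x₀, l₀ x₀ = ∑ x₁, γ (x₀, x₁))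
    (hl₁ : ∀ x₁, l₁ x₁ = ∑ x₀, γ (x₀, x₁)) :
    fDiv f (liftDist A l₀) (liftDist A l₁) ≤ ∑ p : X × X, γ p * fDiv f (A p.1) (A p.2) := by
  calc fDiv f (liftDist A l₀) (liftDist A l₁)
      ≤ ∑ y, ∑ p : X × X, γ p * (A p.2 y * f (A p.1 y / A p.2 y)) := by
        refine sum_le_sum fun y _ => ?_
        rw [liftDist_eq_sum_coupling_fst A hl₀, liftDist_eq_sum_coupling_snd A hl₁]
        exact hf.mul_map_div_sum_le _ (fun p _ => hγ p) (fun p _ => (hA _ y).le)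
          (fun p _ => hA _ y)
    _ = ∑ p : X × X, γ p * fDiv f (A p.1) (A p.2) := by
        rw [sum_comm]
        simp only [fDiv, mul_sum]

end Lifting

theorem stmt5_general {X Y : Type*} [Fintype X] [Fintype Y]
    (d : X → X → ℝ)
    (A : X → Y → ℝ)
    (hA0 : ∀ x y, 0 < A x y)
    (f : ℝ → ℝ) (hconv : ConvexOn ℝ (Set.Ici 0) f)
    (Φ : Set (X × X)) (ε : ℝ)
    (hXDP : ∀ x x', (x, x') ∈ Φ →
        (∑ y, A x' y * f (A x y / A x' y)) ≤ ε * d x x') :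
    ∀ (l₀ l₁ : X → ℝ),
      (∀ x, 0 ≤ l₀ x) → (∑ x, l₀ x = 1) →
      (∀ x, 0 ≤ l₁ x) → (∑ x, l₁ x = 1) →
      ∀ γ : X × X → ℝ, (∀ p, 0 ≤ γ p) →
        (∀ x₀, l₀ x₀ = ∑ x₁, γ (x₀, x₁)) →
        (∀ x₁, l₁ x₁ = ∑ x₀, γ (x₀, x₁)) →
        (∀ p, 0 < γ p → p ∈ Φ) →
        -- γ attains the Earth mover's distance W₁(l₀, l₁)
        (∀ γ' : X × X → ℝ, (∀ p, 0 ≤ γ' p) →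
          (∀ x₀, l₀ x₀ = ∑ x₁, γ' (x₀, x₁)) →
          (∀ x₁, l₁ x₁ = ∑ x₀, γ' (x₀, x₁)) →
          (∑ p : X × X, d p.1 p.2 * γ p) ≤ ∑ p : X × X, d p.1 p.2 * γ' p) →
        ∑ y, (∑ x, l₁ x * A x y) *
            f ((∑ x, l₀ x * A x y) / (∑ x, l₁ x * A x y))
          ≤ ε * ∑ p : X × X, d p.1 p.2 * γ p := by
  intro l₀ l₁ _ _ _ _ γ hγ hl₀ hl₁ hsupp _
  have hpair : ∀ p : X × X, γ p * fDiv f (A p.1) (A p.2) ≤ ε * (d p.1 p.2 * γ p) := by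
    intro p
    rcases (hγ p).eq_or_lt with h | h
    · simp [← h]
    · calc γ p * fDiv f (A p.1) (A p.2) ≤ γ p * (ε * d p.1 p.2) :=
            mul_le_mul_of_nonneg_left (hXDP p.1 p.2 (hsupp p h)) h.le
        _ = ε * (d p.1 p.2 * γ p) := by ring
  calc fDiv f (liftDist A l₀) (liftDist A l₁)
      ≤ ∑ p : X × X, γ p * fDiv f (A p.1) (A p.2) :=
        fDiv_liftDist_le_sum_coupling hconv hA0 hγ hl₀ hl₁
    _ ≤ ε * ∑ p : X × X, d p.1 p.2 * γ p := by
        rw [mul_sum]; exact sum_le_sum fun p _ => hpair p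

/-- (ε, d, D_f)-extended DP implies (ε, W₁, D_f)-extended distribution privacy:
noise proportional to the Earth mover's distance suffices. -/
theorem stmt5 {X Y : Type*} [Fintype X] [Fintype Y]
    (d : X → X → ℝ)
    (hd0 : ∀ x x', 0 ≤ d x x') (hdrefl : ∀ x, d x x = 0)
    (hdsymm : ∀ x x', d x x' = d x' x)
    (hdtri : ∀ x x' x'', d x x'' ≤ d x x' + d x' x'')
    (A : X → Y → ℝ)
    (hA0 : ∀ x y, 0 < A x y) (hA1 : ∀ x, ∑ y, A x y = 1)
    (f : ℝ → ℝ) (hconv : ConvexOn ℝ (Set.Ici 0) f)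
    (hfnonneg : ∀ t, 0 ≤ t → 0 ≤ f t) (hf1 : f 1 = 0)
    (Φ : Set (X × X)) (ε : ℝ) (hε : 0 ≤ ε)
    (hXDP : ∀ x x', (x, x') ∈ Φ →
        (∑ y, A x' y * f (A x y / A x' y)) ≤ ε * d x x') :
    ∀ (l₀ l₁ : X → ℝ),
      (∀ x, 0 ≤ l₀ x) → (∑ x, l₀ x = 1) →
      (∀ x, 0 ≤ l₁ x) → (∑ x, l₁ x = 1) →
      ∀ γ : X × X → ℝ, (∀ p, 0 ≤ γ p) →
        (∀ x₀, l₀ x₀ = ∑ x₁, γ (x₀, x₁)) →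
        (∀ x₁, l₁ x₁ = ∑ x₀, γ (x₀, x₁)) →
        (∀ p, 0 < γ p → p ∈ Φ) →
        -- γ attains the Earth mover's distance W₁(l₀, l₁)
        (∀ γ' : X × X → ℝ, (∀ p, 0 ≤ γ' p) →
          (∀ x₀, l₀ x₀ = ∑ x₁, γ' (x₀, x₁)) →
          (∀ x₁, l₁ x₁ = ∑ x₀, γ' (x₀, x₁)) →
          (∑ p : X × X, d p.1 p.2 * γ p) ≤ ∑ p : X × X, d p.1 p.2 * γ' p) →
        ∑ y, (∑ x, l₁ x * A x y) *
            f ((∑ x, l₀ x * A x y) / (∑ x, l₁ x * A x y))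
          ≤ ε * ∑ p : X × X, d p.1 p.2 * γ p :=
  stmt5_general d A hA0 f hconv Φ ε hXDP
end

section
/- Sequential composition with independent inputs for KL-divergence distribution privacy: if D_KL(A₀#(λ₀)‖A₀#(λ'₀)) ≤ ε₀ and for every y₀ ∈ Y₀, D_KL(A₁(y₀)#(λ₁)‖A₁(y₀)#(λ'₁)) ≤ ε₁, then the composed algorithm producing y₁ by sampling x₀ ∼ λ₀ (resp. λ'₀), y₀ ∼ A₀(x₀), x₁ ∼ λ₁ (resp. λ'₁), y₁ ∼ A₁(y₀, x₁), satisfies D_KL of the two resulting output distributions ≤ ε₀ + ε₁. -/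
/-!
Write `μ, μ'` for the two laws of `y₀` and `ν y₀, ν' y₀` for the two laws of `y₁` given `y₀`.
The output laws are the mixtures `∑ y₀, μ y₀ • ν y₀` and `∑ y₀, μ' y₀ • ν' y₀`, so the log-sum
inequality bounds their divergence by that of the joint laws of `(y₀, y₁)`. By the chain rule the
latter is `D(μ‖μ') + ∑ y₀, μ y₀ • D(ν y₀‖ν' y₀) ≤ ε₀ + ε₁`.
-/

open Finset Real

section KLDivergence

variable {ι κ X : Type*} [Fintype X]

noncomputable def klDivSum [Fintype ι] (p q : ι → ℝ) : ℝ := ∑ i, p i * log (p i / q i)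

/-- `A#(l)` in the notation of the informal statement. -/
def mixture (l : X → ℝ) (A : X → ι → ℝ) (i : ι) : ℝ := ∑ x, l x * A x i

lemma mixture_nonneg {l : X → ℝ} {A : X → ι → ℝ} {i : ι} (hl : ∀ x, 0 ≤ l x)
    (hA : ∀ x, 0 ≤ A x i) : 0 ≤ mixture l A i :=
  sum_nonneg fun x _ => mul_nonneg (hl x) (hA x)

lemma mixture_pos {l : X → ℝ} {A : X → ι → ℝ} {i : ι} (hl : ∀ x, 0 ≤ l x)
    (hl_sum : 0 < ∑ x, l x) (hA : ∀ x, 0 < A x i) : 0 < mixture l A i := by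
  obtain ⟨x, -, hx⟩ := exists_lt_of_sum_lt (s := univ) (f := 0) (g := l) (by simpa using hl_sum)
  exact sum_pos' (fun y _ => mul_nonneg (hl y) (hA y).le) ⟨x, mem_univ x, mul_pos hx (hA x)⟩

lemma sum_mixture [Fintype ι] {l : X → ℝ} {A : X → ι → ℝ} (hA : ∀ x, ∑ i, A x i = 1) :
    ∑ i, mixture l A i = ∑ x, l x := by
  simp only [mixture]
  rw [sum_comm]
  simp only [← mul_sum, hA, mul_one]

lemma mul_log_sub_mul_log_div_le {a b c : ℝ} (ha : 0 ≤ a) (hb : 0 < b) (hc : 0 < c) :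
    a * log c - a * log (a / b) ≤ c * b - a := by
  rcases ha.eq_or_lt with rfl | ha
  · simp only [zero_mul, sub_zero]
    positivity
  rw [← mul_sub, ← log_div hc.ne' (by positivity)]
  calc a * log (c / (a / b)) ≤ a * (c / (a / b) - 1) :=
        mul_le_mul_of_nonneg_left (log_le_sub_one_of_pos (by positivity)) ha.le
    _ = c * b - a := by field_simp

/-- The log-sum inequality. -/
theorem sum_mul_log_sum_div_sum_le [Fintype ι] (a b : ι → ℝ) (ha : ∀ i, 0 ≤ a i)
    (hb : ∀ i, 0 < b i) :
    (∑ i, a i) * log ((∑ i, a i) / ∑ i, b i) ≤ ∑ i, a i * log (a i / b i) := by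
  rcases (sum_nonneg fun i _ => ha i).eq_or_lt with hA | hA
  · have ha0 (i : ι) : a i = 0 :=
      (sum_eq_zero_iff_of_nonneg fun i _ => ha i).1 hA.symm i (mem_univ i)
    simp [ha0]
  have hB : 0 < ∑ i, b i := sum_pos (fun i _ => hb i) (nonempty_of_sum_ne_zero hA.ne')
  -- Sum `a i * log (A / B) - a i * log (a i / b i) ≤ (A / B) * b i - a i`;
  -- the right side sums to 0.
  have key := sum_le_sum fun i (_ : i ∈ univ) =>
    mul_log_sub_mul_log_div_le (ha i) (hb i) (div_pos hA hB)
  rw [sum_sub_distrib, sum_sub_distrib, ← sum_mul, ← mul_sum, div_mul_cancel₀ _ hB.ne'] at key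
  linarith

lemma mul_mul_log_mul_div_mul {a b c d : ℝ} (hc : c ≠ 0) (hd : d ≠ 0) :
    a * b * log (a * b / (c * d)) = a * log (a / c) * b + a * (b * log (b / d)) := by
  rcases eq_or_ne a 0 with rfl | ha
  · simp
  rcases eq_or_ne b 0 with rfl | hb
  · simp
  rw [mul_div_mul_comm, log_mul (div_ne_zero ha hc) (div_ne_zero hb hd)]
  ring

/-- The chain rule: the divergence of the joint laws `μ i * ν i j` and `μ' i * ν' i j`. -/
theorem sum_sum_mul_log_div_eq [Fintype ι] [Fintype κ] (μ μ' : ι → ℝ) (ν ν' : ι → κ → ℝ)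
    (hμ' : ∀ i, μ' i ≠ 0) (hν' : ∀ i j, ν' i j ≠ 0) (hν_sum : ∀ i, ∑ j, ν i j = 1) :
    ∑ i, ∑ j, μ i * ν i j * log (μ i * ν i j / (μ' i * ν' i j)) =
      klDivSum μ μ' + ∑ i, μ i * klDivSum (ν i) (ν' i) := by
  simp only [mul_mul_log_mul_div_mul (hμ' _) (hν' _ _), sum_add_distrib, ← mul_sum, hν_sum,
    mul_one, klDivSum]

theorem klDivSum_mixture_le [Fintype ι] [Fintype κ] (μ μ' : ι → ℝ) (ν ν' : ι → κ → ℝ)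
    (hμ : ∀ i, 0 ≤ μ i) (hμ' : ∀ i, 0 < μ' i) (hν : ∀ i j, 0 ≤ ν i j) (hν' : ∀ i j, 0 < ν' i j)
    (hν_sum : ∀ i, ∑ j, ν i j = 1) :
    klDivSum (mixture μ ν) (mixture μ' ν') ≤
      klDivSum μ μ' + ∑ i, μ i * klDivSum (ν i) (ν' i) := by
  rw [← sum_sum_mul_log_div_eq μ μ' ν ν' (fun i => (hμ' i).ne') (fun i j => (hν' i j).ne')
    hν_sum, sum_comm]
  exact sum_le_sum fun j _ => sum_mul_log_sum_div_sum_le _ _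
    (fun i => mul_nonneg (hμ i) (hν i j)) (fun i => mul_pos (hμ' i) (hν' i j))

end KLDivergence

/-- Sequential composition with independent inputs for KL-divergence
distribution privacy. -/
theorem stmt10 {X Y₀ Y₁ : Type*} [Fintype X] [Fintype Y₀] [Fintype Y₁]
    (A₀ : X → Y₀ → ℝ) (A₁ : Y₀ → X → Y₁ → ℝ)
    (hA₀ : ∀ x y, 0 < A₀ x y) (hA₀1 : ∀ x, ∑ y, A₀ x y = 1)
    (hA₁ : ∀ y₀ x y, 0 < A₁ y₀ x y) (hA₁1 : ∀ y₀ x, ∑ y, A₁ y₀ x y = 1)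
    (l₀ l'₀ l₁ l'₁ : X → ℝ)
    (hl₀ : ∀ x, 0 ≤ l₀ x) (hl₀1 : ∑ x, l₀ x = 1)
    (hl'₀ : ∀ x, 0 ≤ l'₀ x) (hl'₀1 : ∑ x, l'₀ x = 1)
    (hl₁ : ∀ x, 0 ≤ l₁ x) (hl₁1 : ∑ x, l₁ x = 1)
    (hl'₁ : ∀ x, 0 ≤ l'₁ x) (hl'₁1 : ∑ x, l'₁ x = 1)
    (ε₀ ε₁ : ℝ)
    (h0 : ∑ y₀, (∑ x, l₀ x * A₀ x y₀) *
        Real.log ((∑ x, l₀ x * A₀ x y₀) / (∑ x, l'₀ x * A₀ x y₀)) ≤ ε₀)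
    (h1 : ∀ y₀, ∑ y₁, (∑ x, l₁ x * A₁ y₀ x y₁) *
        Real.log ((∑ x, l₁ x * A₁ y₀ x y₁) / (∑ x, l'₁ x * A₁ y₀ x y₁)) ≤ ε₁) :
    ∑ y₁, (∑ y₀, (∑ x, l₀ x * A₀ x y₀) * (∑ x, l₁ x * A₁ y₀ x y₁)) *
        Real.log ((∑ y₀, (∑ x, l₀ x * A₀ x y₀) * (∑ x, l₁ x * A₁ y₀ x y₁)) /
                  (∑ y₀, (∑ x, l'₀ x * A₀ x y₀) * (∑ x, l'₁ x * A₁ y₀ x y₁)))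
      ≤ ε₀ + ε₁ := by
  set μ := mixture l₀ A₀
  set ν := fun y₀ => mixture l₁ (A₁ y₀)
  have hμ (y₀ : Y₀) : 0 ≤ μ y₀ := mixture_nonneg hl₀ fun x => (hA₀ x y₀).le
  calc klDivSum (mixture μ ν) (mixture (mixture l'₀ A₀) fun y₀ => mixture l'₁ (A₁ y₀))
      ≤ klDivSum μ (mixture l'₀ A₀) + ∑ y₀, μ y₀ * klDivSum (ν y₀) (mixture l'₁ (A₁ y₀)) :=
        klDivSum_mixture_le _ _ _ _ hμ
          (fun y₀ => mixture_pos hl'₀ (hl'₀1 ▸ one_pos) fun x => hA₀ x y₀)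
          (fun y₀ y₁ => mixture_nonneg hl₁ fun x => (hA₁ y₀ x y₁).le)
          (fun y₀ y₁ => mixture_pos hl'₁ (hl'₁1 ▸ one_pos) fun x => hA₁ y₀ x y₁)
          (fun y₀ => (sum_mixture (hA₁1 y₀)).trans hl₁1)
    _ ≤ ε₀ + ∑ y₀, μ y₀ * ε₁ :=
        add_le_add h0 (sum_le_sum fun y₀ _ => mul_le_mul_of_nonneg_left (h1 y₀) (hμ y₀))
    _ = ε₀ + ε₁ := by rw [← sum_mul, sum_mixture hA₀1, hl₀1, one_mul]
end
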